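/- Let A be a finite set and let H ⊆ A × A be the edge set of a directed graph on A. Let B be the set of bridge edges of H, and for every strongly connected component S of H choose a maximal child C_S of the edge set H ∩ (S × S). Then the edge set B ∪ ⋃_S C_S (the union taken over all strongly connected components S of H) is acyclic. -/

import Mathlib

/-- The edge relation of an edge set `E ⊆ A × A`. -/
def EdgeRel {A : Type*} (E : Set (A × A)) : A → A → Prop := fun u v => (u, v) ∈ E

/-- An edge set is acyclic if no vertex has a path of length ≥ 1 back to itself. -/
def AcyclicEdges {A : Type*} (E : Set (A × A)) : Prop :=
  ∀ a : A, ¬ Relation.TransGen (EdgeRel E) a a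

/-- Two vertices are strongly connected in `E` if they are equal or there are paths
of length ≥ 1 both ways. -/
def StronglyConn {A : Type*} (E : Set (A × A)) (u v : A) : Prop :=
  u = v ∨ (Relation.TransGen (EdgeRel E) u v ∧ Relation.TransGen (EdgeRel E) v u)

/-- `S` is a strongly connected component of `E`: an equivalence class of the
strongly-connected relation. -/
def IsSCC {A : Type*} (E : Set (A × A)) (S : Set A) : Prop :=
  ∃ a : A, S = {b : A | StronglyConn E a b}

/-- The bridge edges of `E`: edges whose endpoints are not strongly connected in `E`. -/
def BridgeEdges {A : Type*} (E : Set (A × A)) : Set (A × A) :=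
  {e | e ∈ E ∧ ¬ StronglyConn E e.1 e.2}

/-- `C` is a maximal child of the directed graph with edge set `H`. -/
def MaximalChild {A : Type*} (H C : Set (A × A)) : Prop :=
  C ⊆ H ∧ AcyclicEdges C ∧ ∀ e ∈ H \ C, ¬ AcyclicEdges (C ∪ {e})

/-!
A cycle of an edge set `E ⊆ H` never leaves the strongly connected component of `H` through
which it passes, so `E` is acyclic as soon as its restriction to every SCC of `H` is.
For `E = B ∪ ⋃_S C_S` no bridge edge lies inside an SCC, so the restriction of `E` to the
SCC `S` is contained in `C_S`, which is acyclic.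
-/

section

open Relation

variable {A : Type*}

section EdgeSets

variable {E F : Set (A × A)}

lemma edgeRel_mono (h : E ⊆ F) : EdgeRel E ≤ EdgeRel F := fun _ _ huv => h huv

lemma AcyclicEdges.mono (h : E ⊆ F) (hF : AcyclicEdges F) : AcyclicEdges E :=
  fun a ha => hF a (TransGen.mono (edgeRel_mono h) _ _ ha)

end EdgeSets

namespace StronglyConn

variable {E F : Set (A × A)} {u v w : A}

lemma symm (h : StronglyConn E u v) : StronglyConn E v u := by
  rcases h with rfl | ⟨huv, hvu⟩
  · exact Or.inl rfl
  · exact Or.inr ⟨hvu, huv⟩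

lemma trans (huv : StronglyConn E u v) (hvw : StronglyConn E v w) : StronglyConn E u w := by
  rcases huv with rfl | ⟨huv, hvu⟩
  · exact hvw
  rcases hvw with rfl | ⟨hvw, hwv⟩
  · exact Or.inr ⟨huv, hvu⟩
  · exact Or.inr ⟨huv.trans hvw, hwv.trans hvu⟩

lemma mono (h : E ⊆ F) (huv : StronglyConn E u v) : StronglyConn F u v := by
  rcases huv with rfl | ⟨huv, hvu⟩
  · exact Or.inl rfl
  · exact Or.inr ⟨TransGen.mono (edgeRel_mono h) _ _ huv, TransGen.mono (edgeRel_mono h) _ _ hvu⟩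

lemma of_reflTransGen (huv : ReflTransGen (EdgeRel E) u v) (hvu : ReflTransGen (EdgeRel E) v u) :
    StronglyConn E u v := by
  rcases reflTransGen_iff_eq_or_transGen.mp huv with rfl | huv
  · exact Or.inl rfl
  rcases reflTransGen_iff_eq_or_transGen.mp hvu with rfl | hvu
  · exact Or.inl rfl
  · exact Or.inr ⟨huv, hvu⟩

end StronglyConn

def sccOf (E : Set (A × A)) (a : A) : Set A := {b | StronglyConn E a b}

section SCC

variable {E H : Set (A × A)}

lemma sccOf_eq_of_mem {a b : A} (h : b ∈ sccOf E a) : sccOf E b = sccOf E a :=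
  Set.ext fun _ => ⟨h.trans, (StronglyConn.symm h).trans⟩

lemma transGen_inter_sccOf {a x y : A} (hax : ReflTransGen (EdgeRel E) a x)
    (hxy : TransGen (EdgeRel E) x y) (hya : ReflTransGen (EdgeRel E) y a) :
    TransGen (EdgeRel (E ∩ sccOf E a ×ˢ sccOf E a)) x y := by
  induction hxy with
  | single hxy =>
    exact .single ⟨hxy, .of_reflTransGen hax (.head hxy hya),
      .of_reflTransGen (hax.tail hxy) hya⟩
  | tail hxb hbc ih =>
    exact (ih (.head hbc hya)).tail ⟨hbc, .of_reflTransGen (hax.trans hxb.to_reflTransGen)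
      (.head hbc hya), .of_reflTransGen (hax.trans (hxb.tail hbc).to_reflTransGen) hya⟩

lemma acyclicEdges_of_inter_sccOf (hEH : E ⊆ H)
    (h : ∀ a, AcyclicEdges (E ∩ sccOf H a ×ˢ sccOf H a)) : AcyclicEdges E := by
  intro a hcycle
  have hsub : E ∩ sccOf E a ×ˢ sccOf E a ⊆ E ∩ sccOf H a ×ˢ sccOf H a :=
    fun e ⟨he, h1, h2⟩ => ⟨he, h1.mono hEH, h2.mono hEH⟩
  exact (h a).mono hsub a (transGen_inter_sccOf .refl hcycle .refl)

end SCC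

lemma bridgeEdges_union_inter_sccOf_subset {H : Set (A × A)} {Cc : Set A → Set (A × A)}
    (hCc : ∀ S, IsSCC H S → Cc S ⊆ S ×ˢ S) (a : A) :
    (BridgeEdges H ∪ ⋃ S ∈ {S : Set A | IsSCC H S}, Cc S) ∩ sccOf H a ×ˢ sccOf H a
      ⊆ Cc (sccOf H a) := by
  rintro e ⟨⟨-, hbridge⟩ | he, h1, h2⟩
  · exact absurd ((StronglyConn.symm h1).trans h2) hbridge
  · obtain ⟨_, ⟨t, rfl⟩, he⟩ := Set.mem_iUnion₂.mp he
    have ht : sccOf H t = sccOf H a := by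
      rw [← sccOf_eq_of_mem (hCc _ ⟨t, rfl⟩ he).1, sccOf_eq_of_mem h1]
    rwa [← ht]

end

theorem bridges_union_sccMaxChildren_acyclic_general {A : Type*}
    (H : Set (A × A)) (Cc : Set A → Set (A × A))
    (hCc : ∀ S : Set A, IsSCC H S → MaximalChild (H ∩ S ×ˢ S) (Cc S)) :
    AcyclicEdges (BridgeEdges H ∪ ⋃ S ∈ {S : Set A | IsSCC H S}, Cc S) := by
  have hsub : ∀ S, IsSCC H S → Cc S ⊆ H ∩ S ×ˢ S := fun S hS => (hCc S hS).1
  have hEH : BridgeEdges H ∪ ⋃ S ∈ {S : Set A | IsSCC H S}, Cc S ⊆ H := by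
    refine Set.union_subset (fun _ he => he.1) (Set.iUnion₂_subset fun S hS => ?_)
    exact (hsub S hS).trans Set.inter_subset_left
  refine acyclicEdges_of_inter_sccOf hEH fun a => ?_
  refine (hCc _ ⟨a, rfl⟩).2.1.mono ?_
  exact bridgeEdges_union_inter_sccOf_subset
    (fun S hS => (hsub S hS).trans Set.inter_subset_right) a

theorem bridges_union_sccMaxChildren_acyclic {A : Type*} [Fintype A]
    (H : Set (A × A)) (Cc : Set A → Set (A × A))
    (hCc : ∀ S : Set A, IsSCC H S → MaximalChild (H ∩ S ×ˢ S) (Cc S)) :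
    AcyclicEdges (BridgeEdges H ∪ ⋃ S ∈ {S : Set A | IsSCC H S}, Cc S) :=
  bridges_union_sccMaxChildren_acyclic_general H Cc hCc
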